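/- Let H be a Hopf algebra over a commutative ring k, R a left H-module algebra and right H-comodule with coaction r ↦ r₍₀₎ ⊗ r₍₁₎ satisfying braided commutativity r r' = r'₍₀₎ (r'₍₁₎ ▷ r). In the smash product R # H define s(r) = r ⊗ 1 and t(r) = r₍₀₎ ⊗ r₍₁₎. Then the images of s and t commute: s(r) t(r') = t(r') s(r) for all r, r' ∈ R. -/

import Mathlib

open TensorProduct

variable (k H R : Type*) [CommRing k] [Ring H] [HopfAlgebra k H] [Ring R] [Algebra k R]

/-- The smash product multiplication on `R ⊗ H`:
`(r ⊗ h)(r' ⊗ h') = r (h₍₁₎ ▷ r') ⊗ h₍₂₎ h'`, as a linear map. -/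
noncomputable def smashMul (act : H →ₗ[k] R →ₗ[k] R) :
    (R ⊗[k] H) ⊗[k] (R ⊗[k] H) →ₗ[k] R ⊗[k] H :=
  LinearMap.rTensor H (LinearMap.mul' k R) ∘ₗ
    (TensorProduct.assoc k R R H).symm.toLinearMap ∘ₗ
    LinearMap.lTensor R
      (TensorProduct.map (TensorProduct.lift act) (LinearMap.mul' k H) ∘ₗ
        (TensorProduct.tensorTensorTensorComm k H H R H).toLinearMap ∘ₗ
        LinearMap.rTensor (R ⊗[k] H) (Coalgebra.comul (R := k))) ∘ₗ
    (TensorProduct.assoc k R H (R ⊗[k] H)).toLinearMap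

/-- `R` is a braided commutative Yetter-Drinfeld algebra over the Hopf algebra `H`,
with left action `act` and right coaction `δ`; all Sweedler-type identities are
quantified over arbitrary finite representations of the relevant coproducts. -/
structure BraidedCommYD (act : H →ₗ[k] R →ₗ[k] R) (δ : R →ₗ[k] R ⊗[k] H) : Prop where
  act_mul : ∀ (g h : H) (r : R), act (g * h) r = act g (act h r)
  act_one : ∀ r : R, act 1 r = r
  act_alg_mul : ∀ (h : H) (r r' : R) (n : ℕ) (h1 h2 : Fin n → H),
    Coalgebra.comul (R := k) h = ∑ i, h1 i ⊗ₜ[k] h2 i →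
    act h (r * r') = ∑ i, act (h1 i) r * act (h2 i) r'
  act_alg_one : ∀ h : H, act h 1 = Coalgebra.counit (R := k) h • (1 : R)
  coassoc : LinearMap.rTensor H δ ∘ₗ δ =
    (TensorProduct.assoc k R H H).symm.toLinearMap ∘ₗ
      LinearMap.lTensor R (Coalgebra.comul (R := k)) ∘ₗ δ
  counitary : ∀ (r : R) (n : ℕ) (r0 : Fin n → R) (r1 : Fin n → H),
    δ r = ∑ i, r0 i ⊗ₜ[k] r1 i → ∑ i, Coalgebra.counit (R := k) (r1 i) • r0 i = r
  coact_mul : ∀ (r r' : R) (n m : ℕ) (r0 : Fin n → R) (r1 : Fin n → H)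
      (s0 : Fin m → R) (s1 : Fin m → H),
    δ r = ∑ i, r0 i ⊗ₜ[k] r1 i → δ r' = ∑ j, s0 j ⊗ₜ[k] s1 j →
    δ (r * r') = ∑ i, ∑ j, (r0 i * s0 j) ⊗ₜ[k] (s1 j * r1 i)
  coact_one : δ 1 = 1 ⊗ₜ[k] 1
  yd : ∀ (h : H) (r : R) (n m : ℕ) (h1 h2 : Fin n → H) (r0 : Fin m → R) (r1 : Fin m → H),
    Coalgebra.comul (R := k) h = ∑ i, h1 i ⊗ₜ[k] h2 i →
    δ r = ∑ j, r0 j ⊗ₜ[k] r1 j →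
    ∑ i, ∑ j, act (h1 i) (r0 j) ⊗ₜ[k] (h2 i * r1 j) =
      ∑ i, LinearMap.lTensor R (LinearMap.mulRight k (h1 i)) (δ (act (h2 i) r))
  braided : ∀ (r r' : R) (n : ℕ) (s0 : Fin n → R) (s1 : Fin n → H),
    δ r' = ∑ i, s0 i ⊗ₜ[k] s1 i → r * r' = ∑ i, s0 i * act (s1 i) r

theorem exists_fin_rep {M N : Type*} [AddCommMonoid M] [AddCommMonoid N]
    [Module k M] [Module k N] (x : M ⊗[k] N) :
    ∃ (n : ℕ) (a : Fin n → M) (b : Fin n → N), x = ∑ i, a i ⊗ₜ[k] b i := by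
  obtain ⟨S, hS⟩ := TensorProduct.exists_finset x
  exact ⟨S.toList.length, fun i => S.toList[i.1].1, fun i => S.toList[i.1].2, by
    rw [hS, ← Finset.sum_map_toList,
      ← Fin.sum_univ_fun_getElem S.toList (fun p => p.1 ⊗ₜ[k] p.2)]⟩

theorem smashMul_tmul (act : H →ₗ[k] R →ₗ[k] R) (r r' : R) (h h' : H)
    (n : ℕ) (h1 h2 : Fin n → H)
    (hc : Coalgebra.comul (R := k) h = ∑ i, h1 i ⊗ₜ[k] h2 i) :
    smashMul k H R act ((r ⊗ₜ[k] h) ⊗ₜ[k] (r' ⊗ₜ[k] h')) =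
      ∑ i, (r * act (h1 i) r') ⊗ₜ[k] (h2 i * h') := by
  simp only [smashMul, LinearMap.comp_apply, LinearEquiv.coe_coe, assoc_tmul,
    LinearMap.lTensor_tmul, LinearMap.rTensor_tmul, hc, sum_tmul, tmul_sum, map_sum,
    tensorTensorTensorComm_tmul, map_tmul, lift.tmul, LinearMap.mul'_apply, assoc_symm_tmul]

/-- in the smash product `R # H` of a braided commutative Yetter-Drinfeld
algebra `R` over a Hopf algebra `H`, the images of the source `s(r) = r ⊗ 1` and the
target `t(r') = r'₍₀₎ ⊗ r'₍₁₎ = δ(r')` commute. -/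
theorem smash_source_target_commute
    (act : H →ₗ[k] R →ₗ[k] R) (δ : R →ₗ[k] R ⊗[k] H)
    (hR : BraidedCommYD k H R act δ) (r r' : R) :
    smashMul k H R act ((r ⊗ₜ[k] (1 : H)) ⊗ₜ[k] δ r') =
      smashMul k H R act (δ r' ⊗ₜ[k] (r ⊗ₜ[k] (1 : H))) := by
  obtain ⟨n, s0, s1, hδ⟩ := exists_fin_rep k (δ r')
  choose m h1 h2 hc using fun i => exists_fin_rep k (Coalgebra.comul (R := k) (s1 i))
  choose p t0 t1 ht using fun i => exists_fin_rep k (δ (s0 i))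
  have hL : smashMul k H R act ((r ⊗ₜ[k] (1:H)) ⊗ₜ[k] δ r') = ∑ i, (r * s0 i) ⊗ₜ[k] s1 i := by
    rw [hδ, tmul_sum, map_sum]
    refine Finset.sum_congr rfl fun i _ => ?_
    rw [smashMul_tmul k H R act r (s0 i) 1 (s1 i) 1 (fun _ => 1) (fun _ => 1)
      (by simp [Bialgebra.comul_one, Algebra.TensorProduct.one_def])]
    simp [hR.act_one]
  rw [hL, hδ, sum_tmul, map_sum]
  have hRi : ∀ i, smashMul k H R act ((s0 i ⊗ₜ[k] s1 i) ⊗ₜ[k] (r ⊗ₜ[k] (1:H))) =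
      ∑ j, (s0 i * act (h1 i j) r) ⊗ₜ[k] (h2 i j) := by
    intro i
    rw [smashMul_tmul k H R act (s0 i) r (s1 i) 1 (m i) (h1 i) (h2 i) (hc i)]
    simp
  simp only [hRi]
  have E : (∑ i, (δ (s0 i)) ⊗ₜ[k] s1 i : (R ⊗[k] H) ⊗[k] H) =
      ∑ i, ∑ j, (s0 i ⊗ₜ[k] h1 i j) ⊗ₜ[k] h2 i j := by
    have h0 := LinearMap.congr_fun hR.coassoc r'
    simp only [LinearMap.comp_apply, hδ, map_sum, LinearMap.rTensor_tmul,
      LinearMap.lTensor_tmul, LinearEquiv.coe_coe, hc, tmul_sum, assoc_symm_tmul] at h0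
    exact h0
  have E2 := congrArg
    (LinearMap.rTensor H (LinearMap.mul' k R ∘ₗ LinearMap.lTensor R (LinearMap.flip act r))) E
  simp only [map_sum, LinearMap.rTensor_tmul, LinearMap.comp_apply, ht, map_sum,
    LinearMap.lTensor_tmul, LinearMap.flip_apply, LinearMap.mul'_apply, sum_tmul] at E2
  have hb : ∀ i, ∀ l, t0 i l * act (t1 i l) r = t0 i l * act (t1 i l) r := fun _ _ => rfl
  have hbr : ∀ i, (∑ l, t0 i l * act (t1 i l) r) = r * s0 i :=
    fun i => (hR.braided r (s0 i) (p i) (t0 i) (t1 i) (ht i)).symm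
  calc ∑ i, (r * s0 i) ⊗ₜ[k] s1 i
      = ∑ i, (∑ l, t0 i l * act (t1 i l) r) ⊗ₜ[k] s1 i := by
        simp only [hbr]
    _ = ∑ i, ∑ j, (s0 i * act (h1 i j) r) ⊗ₜ[k] h2 i j := by
        simpa [sum_tmul] using E2
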